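/- Let ξ ∈ [0,1] be δ-badly approximable, 0 < δ < 1/2, α ∈ [0,1], β = 1 − α. If a real number η ∈ [0,1] satisfies η ∉ A_α(x) for every x ∈ K_ξ^{(β)}(0,q) and every q, i.e. η ∈ ⋂_q B_q, then the pair (η, ξ) satisfies inf over positive integers p of max{ (p·log(p+1))^α·‖pη‖, (p·log(p+1))^β·‖pξ‖ } ≥ δ, i.e. (η, ξ) ∈ BAD*(α, β; δ). -/

import Mathlib

open Real

/-- Distance from a real number to the nearest integer. -/
noncomputable def nint (t : ℝ) : ℝ := |t - round t|

/-- `l(x,α) = ⌊log(x^{1+α}(log(x+1))^α/(2δ))/log 2⌋`. -/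
noncomputable def lfun (δ α : ℝ) (x : ℕ) : ℤ :=
  ⌊Real.log ((x : ℝ) ^ (1 + α) * (Real.log ((x : ℝ) + 1)) ^ α / (2 * δ)) / Real.log 2⌋

/-- `E_α(x) = ⋃_{y=0}^x (y/x − δ/(x^{1+α}(log(x+1))^α), y/x + δ/(x^{1+α}(log(x+1))^α)) ∩ [0,1]`. -/
noncomputable def Efun (δ α : ℝ) (x : ℕ) : Set ℝ :=
  (⋃ y ∈ Finset.range (x + 1),
    Set.Ioo ((y : ℝ) / (x : ℝ) - δ / ((x : ℝ) ^ (1 + α) * (Real.log ((x : ℝ) + 1)) ^ α))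
            ((y : ℝ) / (x : ℝ) + δ / ((x : ℝ) ^ (1 + α) * (Real.log ((x : ℝ) + 1)) ^ α)))
    ∩ Set.Icc 0 1

/-- `A_α(x)`: the smallest union of level-`l(x,α)` dyadic intervals covering `E_α(x)`. -/
noncomputable def Acov (δ α : ℝ) (x : ℕ) : Set ℝ :=
  ⋃ b : ℤ, ⋃ (_ : (Set.Icc ((b : ℝ) / (2 : ℝ) ^ lfun δ α x) (((b : ℝ) + 1) / (2 : ℝ) ^ lfun δ α x)
      ∩ Efun δ α x).Nonempty),
    Set.Icc ((b : ℝ) / (2 : ℝ) ^ lfun δ α x) (((b : ℝ) + 1) / (2 : ℝ) ^ lfun δ α x)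

/-- `K_ξ^{(β)}(0,q)`. -/
noncomputable def Kset (ξ δ β : ℝ) (q : ℕ) : Set ℕ :=
  {n : ℕ | 0 < n ∧ n ≤ q ∧ nint ((n : ℝ) * ξ) ≤ δ / (((n : ℝ) * Real.log ((n : ℝ) + 1)) ^ β)}

/-!
If `p ∉ K_ξ^{(β)}(0,p)`, the defining inequality of `K` fails for `p`, which is the bound on the
`ξ`-term. Otherwise `η ∉ A_α(p) ⊇ E_α(p)`, so `η` keeps distance at least
`δ / (p^{1+α} (log (p+1))^α)` from every `y / p` with `0 ≤ y ≤ p`, in particular from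
`round (p η) / p`; multiplying by `p` bounds the `η`-term.
-/

theorem subset_iUnion_Icc_div_of_inter_nonempty (s : Set ℝ) {c : ℝ} (hc : 0 < c) :
    s ⊆ ⋃ b : ℤ, ⋃ (_ : (Set.Icc ((b : ℝ) / c) (((b : ℝ) + 1) / c) ∩ s).Nonempty),
      Set.Icc ((b : ℝ) / c) (((b : ℝ) + 1) / c) := by
  intro t ht
  have hmem : t ∈ Set.Icc ((⌊t * c⌋ : ℝ) / c) (((⌊t * c⌋ : ℝ) + 1) / c) :=
    ⟨(div_le_iff₀ hc).2 (Int.floor_le _), (le_div_iff₀ hc).2 (Int.lt_floor_add_one _).le⟩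
  exact Set.mem_iUnion₂.2 ⟨⌊t * c⌋, ⟨t, hmem, ht⟩, hmem⟩

lemma Efun_subset_Acov (δ α : ℝ) (x : ℕ) : Efun δ α x ⊆ Acov δ α x :=
  subset_iUnion_Icc_div_of_inter_nonempty _ (zpow_pos two_pos _)

lemma round_mem_Icc_of_mem_Icc {t : ℝ} {n : ℕ} (ht : t ∈ Set.Icc 0 (n : ℝ)) :
    round t ∈ Set.Icc 0 (n : ℤ) := by
  rw [round_eq]
  constructor
  · exact Int.floor_nonneg.2 (by linarith [ht.1])
  · exact Int.floor_le_iff.2 (by push_cast; linarith [ht.2])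

lemma exists_mem_range_nint_mul_eq {p : ℕ} (hp : 0 < p) {η : ℝ} (hη : η ∈ Set.Icc 0 1) :
    ∃ y ∈ Finset.range (p + 1), nint (p * η) = p * |η - y / p| := by
  have hp' : (0 : ℝ) < p := Nat.cast_pos.2 hp
  have hpη : (p : ℝ) * η ∈ Set.Icc 0 (p : ℝ) :=
    ⟨mul_nonneg hp'.le hη.1, mul_le_of_le_one_right hp'.le hη.2⟩
  obtain ⟨h0, hle⟩ := round_mem_Icc_of_mem_Icc hpη
  lift round ((p : ℝ) * η) to ℕ using h0 with y hy
  refine ⟨y, Finset.mem_range_succ_iff.2 (by exact_mod_cast hle), ?_⟩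
  rw [nint, ← hy, ← abs_of_pos hp', ← abs_mul, abs_of_pos hp']
  congr 1
  push_cast
  field_simp

lemma le_mul_nint_of_notMem_Efun (δ α : ℝ) {p : ℕ} (hp : 0 < p) {η : ℝ}
    (hη : η ∈ Set.Icc 0 1) (hE : η ∉ Efun δ α p) :
    δ ≤ ((p : ℝ) * log (p + 1)) ^ α * nint (p * η) := by
  have hp' : (0 : ℝ) < p := Nat.cast_pos.2 hp
  have hL : 0 < log ((p : ℝ) + 1) := log_pos (by linarith)
  obtain ⟨y, hy, hnint⟩ := exists_mem_range_nint_mul_eq hp hη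
  set r := δ / ((p : ℝ) ^ (1 + α) * log ((p : ℝ) + 1) ^ α) with hr_def
  have hr : r ≤ |η - y / p| := not_lt.1 fun h =>
    hE ⟨Set.mem_biUnion hy (Real.ball_eq_Ioo _ _ ▸ h), hη⟩
  calc δ = ((p : ℝ) * log (p + 1)) ^ α * (p * r) := by
        rw [hr_def, mul_rpow hp'.le hL.le, rpow_add hp', rpow_one]
        field_simp
    _ ≤ ((p : ℝ) * log (p + 1)) ^ α * nint (p * η) := by
        rw [hnint]; gcongr

theorem stmt19_general (ξ δ α β : ℝ)
    (η : ℝ) (hη : η ∈ Set.Icc (0 : ℝ) 1)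
    (hmem : ∀ q : ℕ, ∀ x ∈ Kset ξ δ β q, η ∉ Acov δ α x) :
    ∀ p : ℕ, 0 < p →
      δ ≤ max (((p : ℝ) * Real.log (p + 1)) ^ α * nint ((p : ℝ) * η))
              (((p : ℝ) * Real.log (p + 1)) ^ β * nint ((p : ℝ) * ξ)) := by
  intro p hp
  by_cases hK : p ∈ Kset ξ δ β p
  · exact le_max_of_le_left <| le_mul_nint_of_notMem_Efun δ α hp hη
      fun hE => hmem p p hK (Efun_subset_Acov δ α p hE)
  · have hpL : 0 < (p : ℝ) * log (p + 1) :=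
      mul_pos (Nat.cast_pos.2 hp) (log_pos (by simpa using hp))
    have hξ : δ / ((p : ℝ) * log (p + 1)) ^ β < nint (p * ξ) :=
      not_le.1 fun h => hK ⟨hp, le_rfl, h⟩
    exact le_max_of_le_right ((div_le_iff₀' (rpow_pos_of_pos hpL β)).1 hξ.le)

theorem stmt19 (ξ δ α β : ℝ) (hδ0 : 0 < δ) (hδ1 : δ < 1/2)
    (hα0 : 0 ≤ α) (hα1 : α ≤ 1) (hβ : β = 1 - α)
    (hξ : ξ ∈ Set.Icc (0 : ℝ) 1)
    (hbad : ∀ p : ℕ, 0 < p → δ ≤ (p : ℝ) * nint ((p : ℝ) * ξ))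
    (η : ℝ) (hη : η ∈ Set.Icc (0 : ℝ) 1)
    (hmem : ∀ q : ℕ, ∀ x ∈ Kset ξ δ β q, η ∉ Acov δ α x) :
    ∀ p : ℕ, 0 < p →
      δ ≤ max (((p : ℝ) * Real.log (p + 1)) ^ α * nint ((p : ℝ) * η))
              (((p : ℝ) * Real.log (p + 1)) ^ β * nint ((p : ℝ) * ξ)) :=
  stmt19_general ξ δ α β η hη hmem
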